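/- arXiv:1401.6036 — 3 statements merged into one kernel-verified Lean document; each statement's English description precedes it below -/
import Mathlib

section
/- Let D be a semi self-dual binary code of even length n. Then there are exactly three self-dual codes C with D ⊆ C ⊆ D⊥ (each such C necessarily satisfies D ⊊ C ⊊ D⊥); i.e. the set {C : D ⊆ C ⊆ D⊥ and C = C⊥} has cardinality 3. -/
/-- The Hamming weight of a word in `(ZMod 2)^n`. -/
def wt {n : ℕ} (c : Fin n → ZMod 2) : ℕ :=
  (Finset.univ.filter fun i => c i ≠ 0).card

/-- The dual code of a binary linear code. -/
def dualCode {n : ℕ} (D : Submodule (ZMod 2) (Fin n → ZMod 2)) :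
    Submodule (ZMod 2) (Fin n → ZMod 2) where
  carrier := {v | ∀ c ∈ D, ∑ i, v i * c i = 0}
  zero_mem' := by intro c hc; simp
  add_mem' := by
    intro a b ha hb c hc
    simp [add_mul, Finset.sum_add_distrib, ha c hc, hb c hc]
  smul_mem' := by
    intro r a ha c hc
    simp [mul_assoc, ← Finset.mul_sum, ha c hc]

/-- A semi self-dual code: self-orthogonal, contains the all-ones vector,
and has codimension 2 in its dual. -/
def IsSemiSelfDual {n : ℕ} (D : Submodule (ZMod 2) (Fin n → ZMod 2)) : Prop :=
  D ≤ dualCode D ∧ (fun _ => 1 : Fin n → ZMod 2) ∈ D ∧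
    Module.finrank (ZMod 2) (dualCode D) = Module.finrank (ZMod 2) D + 2

/-- The minimum distance: minimum weight of a nonzero codeword. -/
noncomputable def minDist {n : ℕ} (C : Submodule (ZMod 2) (Fin n → ZMod 2)) : ℕ :=
  sInf {k | ∃ c ∈ C, c ≠ 0 ∧ wt c = k}

/-- Doubly-even codes. -/
def IsDoublyEven {n : ℕ} (D : Submodule (ZMod 2) (Fin n → ZMod 2)) : Prop :=
  ∀ c ∈ D, wt c % 4 = 0

/-! Since `dim C + dim C⊥ = n`, a code `C` between `D` and `D⊥` is self-dual exactly when
`dim C = dim D + 1`. Such a `C` is `D + ⟨z⟩` with `z ∈ D⊥`, and it is self-orthogonal because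
`z ⬝ z = z ⬝ 𝟏 = 0`. These codes correspond to the lines of the plane `D⊥ / D` over `𝔽₂`,
of which there are `2 + 1 = 3`. -/

open Module Submodule

section IntermediateSubspaces

variable {K V : Type*} [Field K] [AddCommGroup V] [Module K V]

theorem finrank_eq_add_finrank_map_mkQ [FiniteDimensional K V] {D C : Submodule K V}
    (h : D ≤ C) : finrank K C = finrank K D + finrank K (C.map D.mkQ) := by
  have := LinearMap.finrank_range_add_finrank_ker (D.mkQ.domRestrict C)
  rw [LinearMap.range_domRestrict, LinearMap.ker_domRestrict, ker_mkQ,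
    (comapSubtypeEquivOfLe h).finrank_eq] at this
  omega

theorem exists_eq_sup_span_singleton [FiniteDimensional K V] {D C : Submodule K V}
    (hDC : D ≤ C) (h : finrank K C = finrank K D + 1) :
    ∃ z ∈ C, C = D ⊔ span K {z} := by
  obtain ⟨z, hzC, hzD⟩ := SetLike.exists_of_lt (lt_of_le_of_finrank_lt_finrank hDC (by omega))
  have hle : D ⊔ span K {z} ≤ C := sup_le hDC ((span_singleton_le_iff_mem z C).2 hzC)
  have hlt : D < D ⊔ span K {z} :=
    lt_of_le_of_ne le_sup_left fun h => hzD (h ▸ mem_sup_right (mem_span_singleton_self z))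
  have hdim := finrank_lt_finrank_of_lt hlt
  exact ⟨z, hzC, (eq_of_le_of_finrank_le hle (by omega)).symm⟩

theorem ncard_setOf_le_finrank_eq_one [Finite K] {W : Submodule K V}
    (hW : finrank K W = 2) :
    {H : Submodule K V | H ≤ W ∧ finrank K H = 1}.ncard = Nat.card K + 1 := by
  have himage : {H : Submodule K V | H ≤ W ∧ finrank K H = 1} =
      map W.subtype '' {H : Submodule K W | finrank K H = 1} := by
    ext H
    constructor
    · rintro ⟨hHW, hH⟩
      have hmap : map W.subtype (comap W.subtype H) = H := by
        rw [map_comap_subtype, inf_eq_right.2 hHW]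
      refine ⟨comap W.subtype H, ?_, hmap⟩
      rwa [Set.mem_ofPred_eq, ← finrank_map_subtype_eq, hmap]
    · rintro ⟨H, hH, rfl⟩
      exact ⟨map_subtype_le W H, by rwa [finrank_map_subtype_eq]⟩
  rw [himage, Set.ncard_image_of_injective _ (map_injective_of_injective W.injective_subtype),
    ← Nat.card_coe_set_eq, ← Projectivization.card_of_finrank_two K W hW]
  exact Nat.card_congr (Projectivization.equivSubmodule K W).symm

theorem ncard_setOf_finrank_eq_succ_between [Finite K] [FiniteDimensional K V]
    {D E : Submodule K V} (hDE : D ≤ E) (hE : finrank K E = finrank K D + 2) :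
    {C : Submodule K V | D ≤ C ∧ C ≤ E ∧ finrank K C = finrank K D + 1}.ncard
      = Nat.card K + 1 := by
  have hE' : finrank K (E.map D.mkQ) = 2 := by
    have := finrank_eq_add_finrank_map_mkQ hDE
    omega
  have hinj : Set.InjOn (map D.mkQ)
      {C : Submodule K V | D ≤ C ∧ C ≤ E ∧ finrank K C = finrank K D + 1} := by
    intro C₁ h₁ C₂ h₂ h
    rw [← sup_eq_right.2 h₁.1, ← sup_eq_right.2 h₂.1, ← comap_map_mkQ, ← comap_map_mkQ, h]
  rw [← hinj.ncard_image, ← ncard_setOf_le_finrank_eq_one hE']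
  congr 1
  ext H
  constructor
  · rintro ⟨C, ⟨hDC, hCE, hC⟩, rfl⟩
    exact ⟨map_mono hCE, by have := finrank_eq_add_finrank_map_mkQ hDC; omega⟩
  · rintro ⟨hHE, hH⟩
    have hDC : D ≤ comap D.mkQ H := by
      simpa only [ker_mkQ] using LinearMap.ker_le_comap D.mkQ
    have hmap : map D.mkQ (comap D.mkQ H) = H := map_comap_eq_of_surjective D.mkQ_surjective H
    refine ⟨comap D.mkQ H, ⟨hDC, ?_, ?_⟩, hmap⟩
    · simpa only [comap_map_mkQ, sup_eq_right.2 hDE] using comap_mono (f := D.mkQ) hHE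
    · rw [finrank_eq_add_finrank_map_mkQ hDC, hmap, hH]

end IntermediateSubspaces

section Codes

variable {n : ℕ}

theorem dualCode_eq_comap_dualAnnihilator (C : Submodule (ZMod 2) (Fin n → ZMod 2)) :
    dualCode C = C.dualAnnihilator.comap (dotProductEquiv (ZMod 2) (Fin n)).toLinearMap := by
  ext v
  simp only [mem_comap, mem_dualAnnihilator]
  rfl

theorem finrank_add_finrank_dualCode (C : Submodule (ZMod 2) (Fin n → ZMod 2)) :
    finrank (ZMod 2) C + finrank (ZMod 2) (dualCode C) = n := by
  rw [dualCode_eq_comap_dualAnnihilator, comap_equiv_eq_map_symm, LinearEquiv.finrank_map_eq,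
    Subspace.finrank_add_finrank_dualAnnihilator_eq, finrank_fin_fun]

theorem dotProduct_self_eq_dotProduct_one {ι : Type*} [Fintype ι] (z : ι → ZMod 2) :
    z ⬝ᵥ z = z ⬝ᵥ (fun _ => 1) := by
  refine Finset.sum_congr rfl fun i _ => ?_
  have : ∀ a : ZMod 2, a * a = a * 1 := by decide
  exact this (z i)

theorem sup_span_singleton_le_dualCode {D : Submodule (ZMod 2) (Fin n → ZMod 2)}
    (hD : D ≤ dualCode D) (hone : (fun _ => 1 : Fin n → ZMod 2) ∈ D)
    {z : Fin n → ZMod 2} (hz : z ∈ dualCode D) :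
    D ⊔ span (ZMod 2) {z} ≤ dualCode (D ⊔ span (ZMod 2) {z}) := by
  have hzz : z ⬝ᵥ z = 0 := by rw [dotProduct_self_eq_dotProduct_one]; exact hz _ hone
  intro x hx c hc
  obtain ⟨x, hxD, _, hs, rfl⟩ := mem_sup.1 hx
  obtain ⟨c, hcD, _, ht, rfl⟩ := mem_sup.1 hc
  obtain ⟨a, rfl⟩ := mem_span_singleton.1 hs
  obtain ⟨b, rfl⟩ := mem_span_singleton.1 ht
  have hxc : x ⬝ᵥ c = 0 := hD hxD c hcD
  have hzc : z ⬝ᵥ c = 0 := hz c hcD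
  have hxz : x ⬝ᵥ z = 0 := by rw [dotProduct_comm]; exact hz x hxD
  show (x + a • z) ⬝ᵥ (c + b • z) = 0
  simp [add_dotProduct, dotProduct_add, hxc, hzc, hxz, hzz]

theorem eq_dualCode_iff_finrank_eq_succ {D C : Submodule (ZMod 2) (Fin n → ZMod 2)}
    (hD : IsSemiSelfDual D) (hDC : D ≤ C) (hCE : C ≤ dualCode D) :
    C = dualCode C ↔ finrank (ZMod 2) C = finrank (ZMod 2) D + 1 := by
  obtain ⟨hDD, hone, hcodim⟩ := hD
  have hdimD := finrank_add_finrank_dualCode D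
  have hdimC := finrank_add_finrank_dualCode C
  constructor
  · intro hC
    rw [← hC] at hdimC
    omega
  · intro hC
    obtain ⟨z, hzC, rfl⟩ := exists_eq_sup_span_singleton hDC hC
    exact eq_of_le_of_finrank_le (sup_span_singleton_le_dualCode hDD hone (hCE hzC)) (by omega)

end Codes

theorem three_self_dual_codes_between_general
    {n : ℕ} (D : Submodule (ZMod 2) (Fin n → ZMod 2))
    (hD : IsSemiSelfDual D) :
    {C : Submodule (ZMod 2) (Fin n → ZMod 2) |
        D ≤ C ∧ C ≤ dualCode D ∧ C = dualCode C}.ncard = 3 ∧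
    ∀ C : Submodule (ZMod 2) (Fin n → ZMod 2),
      D ≤ C → C ≤ dualCode D → C = dualCode C → D < C ∧ C < dualCode D := by
  have hselfDual : {C : Submodule (ZMod 2) (Fin n → ZMod 2) |
      D ≤ C ∧ C ≤ dualCode D ∧ C = dualCode C} =
      {C | D ≤ C ∧ C ≤ dualCode D ∧ finrank (ZMod 2) C = finrank (ZMod 2) D + 1} := by
    ext C
    exact and_congr_right fun hDC => and_congr_right fun hCE =>
      eq_dualCode_iff_finrank_eq_succ hD hDC hCE
  refine ⟨?_, fun C hDC hCE hC => ?_⟩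
  · rw [hselfDual, ncard_setOf_finrank_eq_succ_between hD.1 hD.2.2, Nat.card_zmod]
  · have hdimC := (eq_dualCode_iff_finrank_eq_succ hD hDC hCE).1 hC
    exact ⟨lt_of_le_of_finrank_lt_finrank hDC (by omega),
      lt_of_le_of_finrank_lt_finrank hCE (by rw [hD.2.2]; omega)⟩

/-- A semi self-dual code of even length is contained in exactly three self-dual
codes, each lying strictly between `D` and its dual. -/
theorem three_self_dual_codes_between
    {n : ℕ} (hn : Even n) (D : Submodule (ZMod 2) (Fin n → ZMod 2))
    (hD : IsSemiSelfDual D) :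
    {C : Submodule (ZMod 2) (Fin n → ZMod 2) |
        D ≤ C ∧ C ≤ dualCode D ∧ C = dualCode C}.ncard = 3 ∧
    ∀ C : Submodule (ZMod 2) (Fin n → ZMod 2),
      D ≤ C → C ≤ dualCode D → C = dualCode C → D < C ∧ C < dualCode D :=
  three_self_dual_codes_between_general D hD
end

section
/- Let D be a doubly-even semi self-dual binary code of length n. Then there exists a self-dual code F with D ⊊ F = F⊥ ⊊ D⊥ such that F is not doubly-even and D = F₀ := {f ∈ F : wt(f) ≡ 0 (mod 4)} is the maximal doubly-even subcode of F. -/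
open Matrix Module Submodule

section Weight

variable {n : ℕ}

lemma wt_eq_sum_val (c : Fin n → ZMod 2) : wt c = ∑ i, (c i).val := by
  rw [wt, Finset.card_filter]
  exact Finset.sum_congr rfl fun i _ => by generalize c i = a; revert a; decide

lemma natCast_wt (c : Fin n → ZMod 2) : (wt c : ZMod 2) = ∑ i, c i := by
  simp [wt_eq_sum_val]

-- `u * v` is the coordinatewise product, supported on the intersection of the supports.
lemma wt_add_add_two_mul_wt_mul (u v : Fin n → ZMod 2) :
    wt (u + v) + 2 * wt (u * v) = wt u + wt v := by
  simp only [wt_eq_sum_val, Finset.mul_sum, ← Finset.sum_add_distrib]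
  exact Finset.sum_congr rfl fun i _ => by
    simp only [Pi.add_apply, Pi.mul_apply]
    generalize u i = a; generalize v i = b; revert a b; decide

lemma dotProduct_eq_zero_iff_wt_mul (u v : Fin n → ZMod 2) :
    u ⬝ᵥ v = 0 ↔ wt (u * v) % 2 = 0 := by
  rw [← Nat.even_iff, ← ZMod.natCast_eq_zero_iff_even, natCast_wt]
  rfl

lemma dotProduct_self_eq_zero_iff (c : Fin n → ZMod 2) : c ⬝ᵥ c = 0 ↔ wt c % 2 = 0 := by
  have hcc : c * c = c := funext fun i => (sq (c i)).symm.trans (ZMod.pow_card (c i))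
  rw [dotProduct_eq_zero_iff_wt_mul, hcc]

lemma wt_add_mod_four_of_dotProduct_eq_zero {u v : Fin n → ZMod 2} (h : u ⬝ᵥ v = 0) :
    wt (u + v) % 4 = (wt u + wt v) % 4 := by
  have := wt_add_add_two_mul_wt_mul u v
  have := (dotProduct_eq_zero_iff_wt_mul u v).1 h
  omega

end Weight

section Duality

variable {n : ℕ}

abbrev dotProductForm (n : ℕ) : LinearMap.BilinForm (ZMod 2) (Fin n → ZMod 2) :=
  dotProductBilin (ZMod 2) (ZMod 2)

lemma nondegenerate_dotProductForm : (dotProductForm n).Nondegenerate :=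
  ⟨fun v hv => dotProduct_eq_zero v hv, fun v hv => dotProduct_eq_zero v fun w => by
    rw [dotProduct_comm]; exact hv w⟩

lemma isRefl_dotProductForm : (dotProductForm n).IsRefl := fun u v h => by
  rwa [dotProductBilin_apply_apply, dotProduct_comm] at h

lemma mem_dualCode_iff {D : Submodule (ZMod 2) (Fin n → ZMod 2)} {v : Fin n → ZMod 2} :
    v ∈ dualCode D ↔ ∀ c ∈ D, v ⬝ᵥ c = 0 :=
  Iff.rfl

lemma dualCode_eq_orthogonal (D : Submodule (ZMod 2) (Fin n → ZMod 2)) :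
    dualCode D = (dotProductForm n).orthogonal D := by
  ext v
  simp only [mem_dualCode_iff, LinearMap.BilinForm.mem_orthogonal_iff,
    dotProductBilin_apply_apply, dotProduct_comm v]

lemma finrank_dualCode (D : Submodule (ZMod 2) (Fin n → ZMod 2)) :
    finrank (ZMod 2) (dualCode D) = n - finrank (ZMod 2) D := by
  rw [dualCode_eq_orthogonal, LinearMap.BilinForm.finrank_orthogonal
    nondegenerate_dotProductForm, finrank_fin_fun]

lemma dualCode_dualCode (D : Submodule (ZMod 2) (Fin n → ZMod 2)) :
    dualCode (dualCode D) = D := by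
  rw [dualCode_eq_orthogonal, dualCode_eq_orthogonal,
    LinearMap.BilinForm.orthogonal_orthogonal nondegenerate_dotProductForm isRefl_dotProductForm]

end Duality

section Codes

variable {n : ℕ} {D : Submodule (ZMod 2) (Fin n → ZMod 2)}

lemma IsDoublyEven.le_dualCode (h : IsDoublyEven D) : D ≤ dualCode D := fun u hu v hv => by
  have := wt_add_add_two_mul_wt_mul u v
  have := h u hu
  have := h v hv
  have := h (u + v) (add_mem hu hv)
  exact (dotProduct_eq_zero_iff_wt_mul u v).2 (by omega)

lemma wt_mod_two_of_mem_dualCode (hone : (fun _ => 1 : Fin n → ZMod 2) ∈ D)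
    {v : Fin n → ZMod 2} (hv : v ∈ dualCode D) : wt v % 2 = 0 := by
  rw [← Nat.even_iff, ← ZMod.natCast_eq_zero_iff_even, natCast_wt, ← dotProduct_one]
  exact hv _ hone

lemma IsSemiSelfDual.exists_mem_dualCode_wt_mod_four_eq_two (hD : IsSemiSelfDual D) :
    ∃ x ∈ dualCode D, wt x % 4 = 2 := by
  obtain ⟨-, hone, hrank⟩ := hD
  by_contra! h
  have hde : IsDoublyEven (dualCode D) := fun v hv => by
    have := wt_mod_two_of_mem_dualCode hone hv
    have := h v hv
    omega
  have := finrank_mono (dualCode_dualCode D ▸ hde.le_dualCode)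
  omega

lemma sup_span_singleton_le_dualCode_s8 (hD : D ≤ dualCode D) {x : Fin n → ZMod 2}
    (hx : x ∈ dualCode D) (hxx : x ⬝ᵥ x = 0) :
    D ⊔ span (ZMod 2) {x} ≤ dualCode (D ⊔ span (ZMod 2) {x}) := by
  refine fun _ hu => mem_dualCode_iff.2 fun _ hv => ?_
  obtain ⟨d, hd, _, hs, rfl⟩ := mem_sup.1 hu
  obtain ⟨a, rfl⟩ := mem_span_singleton.1 hs
  obtain ⟨e, he, _, ht, rfl⟩ := mem_sup.1 hv
  obtain ⟨b, rfl⟩ := mem_span_singleton.1 ht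
  have hxd := mem_dualCode_iff.1 hx d hd
  have hxe := mem_dualCode_iff.1 hx e he
  rw [dotProduct_comm] at hxd
  simp [add_dotProduct, dotProduct_add, mem_dualCode_iff.1 (hD hd) e he, hxd, hxe, hxx]

lemma eq_dualCode_of_le_dualCode {C : Submodule (ZMod 2) (Fin n → ZMod 2)}
    (hC : C ≤ dualCode C) (hdim : 2 * finrank (ZMod 2) C = n) : C = dualCode C :=
  eq_of_le_of_finrank_eq hC (by rw [finrank_dualCode]; omega)

lemma IsDoublyEven.mem_of_mem_sup_span_singleton (hde : IsDoublyEven D) {x : Fin n → ZMod 2}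
    (hx : x ∈ dualCode D) (hwx : wt x % 4 = 2) {f : Fin n → ZMod 2}
    (hf : f ∈ D ⊔ span (ZMod 2) {x}) (hwf : wt f % 4 = 0) : f ∈ D := by
  obtain ⟨d, hd, _, hs, rfl⟩ := mem_sup.1 hf
  obtain ⟨a, rfl⟩ := mem_span_singleton.1 hs
  obtain rfl | rfl : a = 0 ∨ a = 1 := (by decide : ∀ b : ZMod 2, b = 0 ∨ b = 1) a
  · simpa using hd
  · have hdx := mem_dualCode_iff.1 hx d hd
    rw [dotProduct_comm] at hdx
    have := wt_add_mod_four_of_dotProduct_eq_zero hdx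
    have := hde d hd
    rw [one_smul] at hwf
    omega

end Codes

/-- A doubly-even semi self-dual code `D` is the maximal doubly-even subcode of
some self-dual code `F` which is not doubly-even, with `D ⊊ F = F⊥ ⊊ D⊥`. -/
theorem exists_self_dual_with_doubly_even_subcode
    {n : ℕ} (D : Submodule (ZMod 2) (Fin n → ZMod 2))
    (hD : IsSemiSelfDual D) (hde : IsDoublyEven D) :
    ∃ F : Submodule (ZMod 2) (Fin n → ZMod 2),
      D < F ∧ F = dualCode F ∧ F < dualCode D ∧ ¬ IsDoublyEven F ∧
      ∀ f : Fin n → ZMod 2, f ∈ D ↔ f ∈ F ∧ wt f % 4 = 0 := by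
  obtain ⟨x, hx, hwx⟩ := hD.exists_mem_dualCode_wt_mod_four_eq_two
  obtain ⟨hDle, -, hrank⟩ := hD
  have hxD : x ∉ D := fun h => by have := hde x h; omega
  set F := D ⊔ span (ZMod 2) {x}
  have hxF : x ∈ F := mem_sup_right (mem_span_singleton_self x)
  have hdimF : finrank (ZMod 2) F = finrank (ZMod 2) D + 1 := finrank_sup_span_singleton hxD
  have hdimD := finrank_dualCode D
  have hxx : x ⬝ᵥ x = 0 := (dotProduct_self_eq_zero_iff x).2 (by omega)
  refine ⟨F, lt_sup_iff_notMem.2 hxD, ?_, ?_, fun hF => ?_, fun f => ⟨?_, ?_⟩⟩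
  · exact eq_dualCode_of_le_dualCode (sup_span_singleton_le_dualCode_s8 hDle hx hxx) (by omega)
  · exact lt_of_le_of_finrank_lt_finrank (sup_le hDle ((span_singleton_le_iff_mem x _).2 hx))
      (by omega)
  · have := hF x hxF
    omega
  · exact fun hf => ⟨mem_sup_left hf, hde f hf⟩
  · exact fun ⟨hf, hwf⟩ => hde.mem_of_mem_sup_span_singleton hx hwx hf hwf
end

section
/- Let N ≥ 2 be a natural number, let L = ⌊(N−2)/4⌋, and let ε₀, ε₁, …, ε_L be real numbers. Suppose that every coefficient of the real polynomial P(Y) = (1+Y⁴) · ∑_{i=0}^{L} εᵢ · Y^{N−2−4i} · (1−Y⁴)^{2i} is a non-negative integer. Then each εᵢ is a non-negative integer. -/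
/-!
Write `M = N - 2`, `t = Y⁴` and `y = (1 - t)²`. The expansion
`1 - t + t² - ⋯ + t^(2m) = ∑ᵢ C(m+i, 2i) t^(m-i) yⁱ` (a homogenized Morgan–Voyce polynomial) gives
`(1 + Y⁴) ∑ᵢ C(m+i, 2i) Y^(M-4i) y^i = Y^(M-4m) + Y^(M+4m+4)`.
The matrix `C(m+i, 2i)` is unitriangular, so `εᵢ = ∑ₘ cₘ C(m+i, 2i)` for some reals `cₘ`, and then
`P = ∑ₘ cₘ (Y^(M-4m) + Y^(M+4m+4))`. The exponents `M - 4m` are distinct and do not occur among the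
`M + 4m + 4`, so each `cₘ` is a coefficient of `P`, hence a natural number, and so is every `εᵢ`.
-/

open Polynomial Finset

variable {R : Type*} [CommRing R]

/-- `x ^ m * b_m (y / x)` and `x ^ m * B_m (y / x)` for the Morgan–Voyce polynomials
`b_m = ∑ₖ C(m+k, 2k) Xᵏ` and `B_m = ∑ₖ C(m+k+1, 2k+1) Xᵏ`. -/
def morganVoyceb (x y : R) (m : ℕ) : R :=
  ∑ p ∈ antidiagonal m, ((m + p.1).choose (2 * p.1) : R) * x ^ p.2 * y ^ p.1

def morganVoyceB (x y : R) (m : ℕ) : R :=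
  ∑ p ∈ antidiagonal m, ((m + p.1 + 1).choose (2 * p.1 + 1) : R) * x ^ p.2 * y ^ p.1

theorem mul_sum_antidiagonal_eq_sum_antidiagonal_succ (x y : R) (m : ℕ) (a : ℕ → R)
    (ha : a (m + 1) = 0) :
    x * ∑ p ∈ antidiagonal m, a p.1 * x ^ p.2 * y ^ p.1 =
      ∑ p ∈ antidiagonal (m + 1), a p.1 * x ^ p.2 * y ^ p.1 := by
  rw [Nat.sum_antidiagonal_succ', ha, mul_sum]
  simp only [zero_mul, zero_add, pow_succ]
  exact sum_congr rfl fun p _ => by ring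

theorem morganVoyceb_succ (x y : R) (m : ℕ) :
    morganVoyceb x y (m + 1) = x * morganVoyceb x y m + y * morganVoyceB x y m := by
  rw [morganVoyceb, morganVoyceb,
    mul_sum_antidiagonal_eq_sum_antidiagonal_succ x y m (fun i => ((m + i).choose (2 * i) : R))
      (by simp [Nat.choose_eq_zero_of_lt (show m + (m + 1) < 2 * (m + 1) by omega)]),
    Nat.sum_antidiagonal_succ, Nat.sum_antidiagonal_succ, morganVoyceB, mul_sum,
    add_assoc (G := R), ← sum_add_distrib]
  congr 1
  · simp
  refine sum_congr rfl fun p _ => ?_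
  rw [show m + 1 + (p.1 + 1) = (m + p.1 + 1) + 1 by ring,
    show 2 * (p.1 + 1) = (2 * p.1 + 1) + 1 by ring, Nat.choose_succ_succ',
    show m + p.1 + 1 = m + (p.1 + 1) by ring]
  push_cast
  ring

theorem morganVoyceB_succ (x y : R) (m : ℕ) :
    morganVoyceB x y (m + 1) = morganVoyceb x y (m + 1) + x * morganVoyceB x y m := by
  rw [morganVoyceB, morganVoyceB, morganVoyceb,
    mul_sum_antidiagonal_eq_sum_antidiagonal_succ x y m
      (fun i => ((m + i + 1).choose (2 * i + 1) : R))
      (by simp [Nat.choose_eq_zero_of_lt (show m + (m + 1) + 1 < 2 * (m + 1) + 1 by omega)]),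
    ← sum_add_distrib]
  refine sum_congr rfl fun p _ => ?_
  rw [show m + 1 + p.1 + 1 = (m + p.1 + 1) + 1 by ring, Nat.choose_succ_succ',
    show m + 1 + p.1 = m + p.1 + 1 by ring]
  push_cast
  ring

/-- At `y = (1 - t) ^ 2` the two families are `1 - t + ⋯ + t ^ (2m)` and
`1 + t ^ 2 + ⋯ + t ^ (2m)`. -/
theorem morganVoyce_one_sub_sq (t : R) (m : ℕ) :
    (1 + t) * morganVoyceb t ((1 - t) ^ 2) m = 1 + t ^ (2 * m + 1) ∧
      (1 - t ^ 2) * morganVoyceB t ((1 - t) ^ 2) m = 1 - t ^ (2 * m + 2) := by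
  induction m with
  | zero => simp [morganVoyceb, morganVoyceB]
  | succ m ih =>
    obtain ⟨hb, hB⟩ := ih
    have hb' : (1 + t) * morganVoyceb t ((1 - t) ^ 2) (m + 1) = 1 + t ^ (2 * (m + 1) + 1) := by
      rw [morganVoyceb_succ]
      linear_combination t * hb + (1 - t) * hB
    refine ⟨hb', ?_⟩
    rw [morganVoyceB_succ]
    linear_combination (1 - t) * hb' + t * hB

theorem morganVoyceb_eq_sum_range (x y : R) (m : ℕ) :
    morganVoyceb x y m = ∑ i ∈ range (m + 1), ((m + i).choose (2 * i) : R) * x ^ (m - i) * y ^ i :=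
  Nat.sum_antidiagonal_eq_sum_range_succ (fun i j => ((m + i).choose (2 * i) : R) * x ^ j * y ^ i) m

theorem one_add_pow_four_mul_sum_choose (x : R) {M m n : ℕ} (hmn : m < n) (hmM : 4 * m ≤ M) :
    (1 + x ^ 4) * ∑ i ∈ range n,
        ((m + i).choose (2 * i) : R) * x ^ (M - 4 * i) * (1 - x ^ 4) ^ (2 * i) =
      x ^ (M - 4 * m) + x ^ (M + 4 * m + 4) := by
  have hsum : ∑ i ∈ range n,
        ((m + i).choose (2 * i) : R) * x ^ (M - 4 * i) * (1 - x ^ 4) ^ (2 * i) =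
      x ^ (M - 4 * m) * morganVoyceb (x ^ 4) ((1 - x ^ 4) ^ 2) m := by
    rw [morganVoyceb_eq_sum_range, mul_sum, ← sum_subset (range_subset_range.mpr hmn)]
    · refine sum_congr rfl fun i hi => ?_
      have him : i ≤ m := Nat.lt_succ_iff.mp (mem_range.mp hi)
      rw [← pow_mul, ← pow_mul, show M - 4 * i = M - 4 * m + 4 * (m - i) by omega, pow_add]
      ring
    · intro i _ hi
      rw [Nat.choose_eq_zero_of_lt (by simp at hi; omega)]
      simp
  rw [hsum, mul_left_comm, (morganVoyce_one_sub_sq (x ^ 4) m).1, ← pow_mul, mul_add, ← pow_add,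
    show M - 4 * m + 4 * (2 * m + 1) = M + 4 * m + 4 by omega, mul_one]

theorem exists_eq_sum_mul_of_unitriangular (g : ℕ → ℕ → R) (hdiag : ∀ m, g m m = 1)
    (hzero : ∀ m i, m < i → g m i = 0) (ε : ℕ → R) (n : ℕ) :
    ∃ c : ℕ → R, ∀ i < n, ε i = ∑ m ∈ range n, c m * g m i := by
  induction n generalizing ε with
  | zero => exact ⟨0, by simp⟩
  | succ n ih =>
    obtain ⟨c, hc⟩ := ih fun i => ε i - ε n * g n i
    refine ⟨Function.update c n (ε n), fun i hi => ?_⟩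
    rw [sum_range_succ, Function.update_self,
      sum_congr rfl fun m hm => by rw [Function.update_of_ne (mem_range.mp hm).ne]]
    rcases (Nat.lt_succ_iff.mp hi).lt_or_eq with hin | rfl
    · rw [← hc i hin]; ring
    · rw [sum_eq_zero fun m hm => by rw [hzero m i (mem_range.mp hm), mul_zero], hdiag]; ring

theorem one_add_X_pow_four_mul_sum_eq {M L : ℕ} (hLM : 4 * L ≤ M) {ε c : ℕ → R}
    (hc : ∀ i ≤ L, ε i = ∑ m ∈ range (L + 1), c m * (m + i).choose (2 * i)) :
    (1 + X ^ 4) * ∑ i ∈ range (L + 1), C (ε i) * X ^ (M - 4 * i) * (1 - X ^ 4) ^ (2 * i) =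
      ∑ m ∈ range (L + 1), C (c m) * (X ^ (M - 4 * m) + X ^ (M + 4 * m + 4)) := by
  calc (1 + X ^ 4) * ∑ i ∈ range (L + 1), C (ε i) * X ^ (M - 4 * i) * (1 - X ^ 4) ^ (2 * i)
      = ∑ m ∈ range (L + 1), C (c m) * ((1 + X ^ 4) * ∑ i ∈ range (L + 1),
          ((m + i).choose (2 * i) : R[X]) * X ^ (M - 4 * i) * (1 - X ^ 4) ^ (2 * i)) := by
        rw [sum_congr rfl fun i hi => by rw [hc i (Nat.lt_succ_iff.mp (mem_range.mp hi))]]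
        simp only [map_sum, map_mul, map_natCast, sum_mul, mul_sum]
        rw [sum_comm]
        exact sum_congr rfl fun m _ => sum_congr rfl fun i _ => by ring
    _ = ∑ m ∈ range (L + 1), C (c m) * (X ^ (M - 4 * m) + X ^ (M + 4 * m + 4)) :=
        sum_congr rfl fun m hm => by
          rw [one_add_pow_four_mul_sum_choose X (mem_range.mp hm)
            (by have := mem_range.mp hm; omega)]

theorem coeff_sum_C_mul_X_pow_add_X_pow {M L m : ℕ} (hLM : 4 * L ≤ M) (hmL : m ≤ L)
    (c : ℕ → R) :
    (∑ j ∈ range (L + 1), C (c j) * (X ^ (M - 4 * j) + X ^ (M + 4 * j + 4))).coeff (M - 4 * m) =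
      c m := by
  rw [finsetSum_coeff, sum_eq_single m]
  · simp [coeff_X_pow, show M - 4 * m ≠ M + 4 * m + 4 by omega]
  · intro j hj hjm
    have hjL := mem_range.mp hj
    simp [coeff_X_pow, show M - 4 * m ≠ M - 4 * j by omega,
      show M - 4 * m ≠ M + 4 * j + 4 by omega]
  · simp; omega

theorem eps_nonneg_integers_general
    (N : ℕ) (ε : ℕ → ℝ)
    (h : ∀ k : ℕ, ∃ a : ℕ,
      ((1 + X ^ 4) *
        ∑ i ∈ Finset.range ((N - 2) / 4 + 1),
          C (ε i) * X ^ (N - 2 - 4 * i) * (1 - X ^ 4) ^ (2 * i) :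
        Polynomial ℝ).coeff k = (a : ℝ)) :
    ∀ i ≤ (N - 2) / 4, ∃ a : ℕ, ε i = (a : ℝ) := by
  set M := N - 2
  set L := M / 4
  have hLM : 4 * L ≤ M := Nat.mul_div_le M 4
  obtain ⟨c, hc⟩ := exists_eq_sum_mul_of_unitriangular (fun m i => ((m + i).choose (2 * i) : ℝ))
    (fun m => by simp [← two_mul])
    (fun m i hmi => by simp [Nat.choose_eq_zero_of_lt (show m + i < 2 * i by omega)]) ε (L + 1)
  have hP := one_add_X_pow_four_mul_sum_eq hLM fun i hi => hc i (Nat.lt_succ_of_le hi)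
  have hc_nat : ∀ m ≤ L, ∃ a : ℕ, c m = a := fun m hmL => by
    obtain ⟨a, ha⟩ := h (M - 4 * m)
    rw [hP, coeff_sum_C_mul_X_pow_add_X_pow hLM hmL] at ha
    exact ⟨a, ha⟩
  choose! a ha using hc_nat
  intro i hi
  refine ⟨∑ m ∈ range (L + 1), a m * (m + i).choose (2 * i), ?_⟩
  rw [hc i (Nat.lt_succ_of_le hi)]
  push_cast
  exact sum_congr rfl fun m hm => by rw [ha m (Nat.lt_succ_iff.mp (mem_range.mp hm))]

/-- If all the coefficients of the real polynomial
`(1+Y⁴) · ∑_{i=0}^{⌊(N-2)/4⌋} εᵢ Y^{N-2-4i} (1-Y⁴)^{2i}` are non-negative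
integers, then each `εᵢ` is a non-negative integer. -/
theorem eps_nonneg_integers
    (N : ℕ) (hN : 2 ≤ N) (ε : ℕ → ℝ)
    (h : ∀ k : ℕ, ∃ a : ℕ,
      ((1 + X ^ 4) *
        ∑ i ∈ Finset.range ((N - 2) / 4 + 1),
          C (ε i) * X ^ (N - 2 - 4 * i) * (1 - X ^ 4) ^ (2 * i) :
        Polynomial ℝ).coeff k = (a : ℝ)) :
    ∀ i ≤ (N - 2) / 4, ∃ a : ℕ, ε i = (a : ℝ) :=
  eps_nonneg_integers_general N ε h
end
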